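/- The Green function solves the fractional heat equation: for every x ∈ ℝ, the map t ↦ G_{α,δ}(t,x) is differentiable on (0,∞) and ∂_t G_{α,δ}(t,x) = (1/(2π)) ∫_ℝ exp(−i x λ) ψ_{α,δ}(λ) exp(ψ_{α,δ}(λ) t) dλ, i.e. ∂_t G_{α,δ}(t,·) equals the fractional derivative D^α_δ applied to G_{α,δ}(t,·). -/

import Mathlib

/-!
Since `α` is not an odd integer, the constraint on `δ` forces `|δ| < 1`, so
`Re ψ_{α,δ}(λ) = -cos(δπ/2) |λ|^α` with `cos(δπ/2) > 0`. For `s ≥ t/2` the `s`-derivative of the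
integrand, `ψ_{α,δ}(λ) e^{-ixλ} e^{ψ_{α,δ}(λ) s}`, is then dominated by the integrable function
`|λ|^α exp(-cos(δπ/2) (t/2) |λ|^α)`, and one differentiates under the integral sign.
-/

open MeasureTheory Filter Asymptotics

/-- The largest even integer not exceeding `α` (as a real number). -/
noncomputable def evenPart (α : ℝ) : ℝ := 2 * (⌊α / 2⌋ : ℝ)

/-- The symbol `ψ_{α,δ}(λ) = -|λ|^α exp(-i δ (π/2) sgn λ)` of the fractional
derivative operator. -/
noncomputable def psiSymb (α δ : ℝ) (l : ℝ) : ℂ :=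
  -((|l| ^ α : ℝ) : ℂ) *
    Complex.exp (-Complex.I * ((δ * (Real.pi / 2) * Real.sign l : ℝ) : ℂ))

/-- The Green function `G_{α,δ}(t,x) = (1/(2π)) ∫ exp(-i x λ) exp(ψ_{α,δ}(λ) t) dλ`. -/
noncomputable def greenG (α δ : ℝ) (t x : ℝ) : ℂ :=
  ((1 / (2 * Real.pi) : ℝ) : ℂ) *
    ∫ l : ℝ, Complex.exp (-Complex.I * (x : ℂ) * (l : ℂ)) *
      Complex.exp (psiSymb α δ l * (t : ℂ))

open Set in
theorem integrable_comp_abs_of_integrableOn_Ioi {E : Type*} [NormedAddCommGroup E] {f : ℝ → E}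
    (hf : IntegrableOn f (Ioi 0)) : Integrable fun x => f |x| := by
  have hIoi : IntegrableOn (fun x => f |x|) (Ioi 0) :=
    hf.congr_fun (fun x hx => by rw [abs_of_pos hx]) measurableSet_Ioi
  have hIic : IntegrableOn (fun x => f |x|) (Iic 0) := by
    have hneg : MeasurableEmbedding fun x : ℝ => -x := (Homeomorph.neg ℝ).measurableEmbedding
    rw [← Measure.map_neg_eq_self (volume : Measure ℝ), hneg.integrableOn_map_iff]
    simp_rw [Function.comp_def, abs_neg, neg_preimage, neg_Iic, neg_zero]
    exact (integrableOn_Ici_iff_integrableOn_Ioi (by finiteness)).mpr hIoi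
  simpa only [Iic_union_Ioi, integrableOn_univ] using hIic.union hIoi

theorem integrable_abs_rpow_mul_exp_neg_mul_abs_rpow {p s b : ℝ} (hs : -1 < s) (hp : 0 < p)
    (hb : 0 < b) : Integrable fun x : ℝ => |x| ^ s * Real.exp (-b * |x| ^ p) :=
  integrable_comp_abs_of_integrableOn_Ioi (integrableOn_rpow_mul_exp_neg_mul_rpow hs hp hb)

@[fun_prop]
theorem Real.measurable_sign : Measurable Real.sign :=
  (measurable_const.ite measurableSet_Iio (measurable_const.ite measurableSet_Ioi measurable_const))

theorem measurable_psiSymb (α δ : ℝ) : Measurable (psiSymb α δ) := by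
  unfold psiSymb
  fun_prop

theorem norm_psiSymb (α δ l : ℝ) : ‖psiSymb α δ l‖ = |l| ^ α := by
  rw [psiSymb, norm_mul, norm_neg, Complex.norm_real, Complex.norm_exp]
  simp [abs_of_nonneg (Real.rpow_nonneg (abs_nonneg l) α)]

theorem re_psiSymb {α : ℝ} (hα : α ≠ 0) (δ l : ℝ) :
    (psiSymb α δ l).re = -(|l| ^ α * Real.cos (δ * (Real.pi / 2))) := by
  rcases Real.sign_apply_eq l with h | h | h
  · simp [psiSymb, Complex.exp_re, Complex.exp_im, h]
  · simp [psiSymb, Real.sign_eq_zero_iff.mp h, Real.zero_rpow hα]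
  · simp [psiSymb, Complex.exp_re, Complex.exp_im, h]

theorem abs_lt_one_of_abs_le_min_evenPart {α δ : ℝ} (hα : 0 < α) (hαint : ∀ n : ℕ, α ≠ n)
    (hδ : |δ| ≤ min (α - evenPart α) (2 + evenPart α - α)) : |δ| < 1 := by
  obtain ⟨k, hk⟩ := Int.eq_ofNat_of_zero_le (Int.floor_nonneg.mpr (by positivity : 0 ≤ α / 2))
  have hodd : α - evenPart α ≠ 1 := by
    intro h
    refine hαint (2 * k + 1) ?_
    rw [evenPart, hk] at h
    push_cast at h ⊢
    linarith
  rcases hodd.lt_or_gt with h | h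
  · exact hδ.trans_lt ((min_le_left _ _).trans_lt h)
  · exact hδ.trans_lt ((min_le_right _ _).trans_lt (by linarith))

theorem norm_cexp_mul_ofReal_le {z : ℂ} {a s : ℝ} (hz : z.re ≤ a) (hs : 0 ≤ s) :
    ‖Complex.exp (z * s)‖ ≤ Real.exp (a * s) := by
  rw [Complex.norm_exp, Complex.re_mul_ofReal]
  exact Real.exp_le_exp.mpr (mul_le_mul_of_nonneg_right hz hs)

theorem hasDerivAt_integral_mul_cexp_mul_ofReal {α c t : ℝ} {ψ e : ℝ → ℂ} (hα : 0 < α)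
    (hc : 0 < c) (hψ_meas : Measurable ψ) (hψ_norm : ∀ l, ‖ψ l‖ ≤ |l| ^ α)
    (hψ_re : ∀ l, (ψ l).re ≤ -(c * |l| ^ α)) (he_meas : Measurable e)
    (he_norm : ∀ l, ‖e l‖ ≤ 1) (ht : 0 < t) :
    HasDerivAt (fun s : ℝ => ∫ l, e l * Complex.exp (ψ l * s))
      (∫ l, e l * (ψ l * Complex.exp (ψ l * t))) t := by
  have hdecay : ∀ l {s : ℝ}, 0 ≤ s →
      ‖Complex.exp (ψ l * s)‖ ≤ Real.exp (-(c * s) * |l| ^ α) := fun l s hs =>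
    (norm_cexp_mul_ofReal_le (hψ_re l) hs).trans_eq (by ring_nf)
  have hF_meas : ∀ s : ℝ, AEStronglyMeasurable (fun l => e l * Complex.exp (ψ l * s)) :=
    fun s => by fun_prop
  have hF_int : Integrable (fun l => e l * Complex.exp (ψ l * t)) := by
    refine Integrable.mono' (g := fun l => |l| ^ (0 : ℝ) * Real.exp (-(c * t) * |l| ^ α))
      (integrable_abs_rpow_mul_exp_neg_mul_abs_rpow (by norm_num) hα (by positivity))
      (hF_meas t) (Eventually.of_forall fun l => ?_)
    rw [norm_mul, Real.rpow_zero, one_mul]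
    exact (mul_le_of_le_one_left (norm_nonneg _) (he_norm l)).trans (hdecay l ht.le)
  have h_bound : ∀ l, ∀ s ∈ Metric.ball t (t / 2),
      ‖e l * (ψ l * Complex.exp (ψ l * s))‖ ≤ |l| ^ α * Real.exp (-(c * (t / 2)) * |l| ^ α) := by
    intro l s hs
    have hst : t / 2 ≤ s := by
      rw [Metric.mem_ball, Real.dist_eq, abs_lt] at hs
      linarith
    rw [norm_mul, norm_mul]
    refine (mul_le_of_le_one_left (by positivity) (he_norm l)).trans
      (mul_le_mul (hψ_norm l) ?_ (norm_nonneg _) (by positivity))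
    refine (hdecay l (by linarith)).trans (Real.exp_le_exp.mpr ?_)
    have : 0 ≤ c * |l| ^ α := by positivity
    nlinarith
  have h_deriv : ∀ l, ∀ s ∈ Metric.ball t (t / 2), HasDerivAt
      (fun s : ℝ => e l * Complex.exp (ψ l * s)) (e l * (ψ l * Complex.exp (ψ l * s))) s := by
    intro l s _
    have h := (((hasDerivAt_id (s : ℂ)).const_mul (ψ l)).cexp).comp_ofReal
    simpa only [id, mul_one, mul_comm (Complex.exp _)] using h.const_mul (e l)
  exact (hasDerivAt_integral_of_dominated_loc_of_deriv_le (Metric.ball_mem_nhds t (by positivity))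
    (Eventually.of_forall hF_meas) hF_int (by fun_prop) (Eventually.of_forall h_bound)
    (integrable_abs_rpow_mul_exp_neg_mul_abs_rpow (by linarith) hα (by positivity))
    (Eventually.of_forall h_deriv)).2

theorem statement11 (α δ : ℝ) (hα : 0 < α) (hαint : ∀ n : ℕ, α ≠ n)
    (hδ : |δ| ≤ min (α - evenPart α) (2 + evenPart α - α))
    (x : ℝ) (t : ℝ) (ht : 0 < t) :
    HasDerivAt (fun s : ℝ => greenG α δ s x)
      (((1 / (2 * Real.pi) : ℝ) : ℂ) *
        ∫ l : ℝ, Complex.exp (-Complex.I * (x : ℂ) * (l : ℂ)) *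
          (psiSymb α δ l * Complex.exp (psiSymb α δ l * (t : ℂ)))) t := by
  have hδ_lt_one := abs_lt_one_of_abs_le_min_evenPart hα hαint hδ
  have hc : 0 < Real.cos (δ * (Real.pi / 2)) := by
    apply Real.cos_pos_of_mem_Ioo
    constructor <;> nlinarith [abs_lt.mp hδ_lt_one, Real.pi_pos]
  have hψ_re (l : ℝ) : (psiSymb α δ l).re ≤ -(Real.cos (δ * (Real.pi / 2)) * |l| ^ α) := by
    rw [re_psiSymb hα.ne', mul_comm]
  have he_norm (l : ℝ) : ‖Complex.exp (-Complex.I * x * l)‖ ≤ 1 := by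
    simp [Complex.norm_exp]
  exact (hasDerivAt_integral_mul_cexp_mul_ofReal hα hc (measurable_psiSymb α δ)
    (fun l => (norm_psiSymb α δ l).le) hψ_re (by fun_prop) he_norm ht).const_mul _
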